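/- arXiv:2206.14707 — 6 statements merged into one kernel-verified Lean document; each statement's English description precedes it below -/
import Mathlib

section
/- Let f : ℝ^d → ℝ be a polyhedral convex function, i.e., f(x) = max_{1≤j≤m} (⟨a_j, x⟩ + c_j) for finitely many a_j ∈ ℝ^d, c_j ∈ ℝ, and suppose f attains its minimum value f* = inf_x f(x). Then there exists a constant H ≥ 0 such that for all x ∈ ℝ^d, the distance (in sup norm) from x to the set S = {x : f(x) = f*} of minimizers satisfies d_∞(x, S) ≤ H · (f(x) − f*). -/
lemma dim1 {ι : Type} [Fintype ι] (α β : ι → ℝ)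
    (hz : ∀ j, α j = 0 → 0 ≤ β j)
    (hpn : ∀ p n, 0 < α p → α n < 0 → β n / α n ≤ β p / α p)
    (K₂ : ℝ) (hK₂0 : 0 ≤ K₂) (hK : ∀ j, |(α j)⁻¹| ≤ K₂) (x ρ : ℝ) (hρ : 0 ≤ ρ)
    (hx : ∀ j, α j * x ≤ β j + ρ) :
    ∃ t, (∀ j, α j * t ≤ β j) ∧ |x - t| ≤ K₂ * ρ := by
  classical
  by_cases hA : ∃ j, 0 < α j ∧ β j / α j < x
  · obtain ⟨j₀, hj₀, hj₀x⟩ := hA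
    set P := Finset.univ.filter (fun j => 0 < α j) with hP
    obtain ⟨p, hpP, hpmin⟩ := P.exists_min_image (fun j => β j / α j)
      ⟨j₀, by simp [hP, hj₀]⟩
    have hp : 0 < α p := by simpa [hP] using hpP
    refine ⟨β p / α p, ?_, ?_⟩
    · intro j
      rcases lt_trichotomy (α j) 0 with hj | hj | hj
      · have h1 : β j / α j ≤ β p / α p := hpn p j hp hj
        have h2 := (div_le_iff_of_neg hj).mp h1
        linarith [h2]
      · simpa [hj] using hz j hj
      · have h1 : β p / α p ≤ β j / α j := hpmin j (by simp [hP, hj])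
        have h2 := (le_div_iff₀ hj).mp h1
        linarith [h2]
    · have h1 : β p / α p ≤ β j₀ / α j₀ := hpmin j₀ (by simp [hP, hj₀])
      have hlt : β p / α p < x := lt_of_le_of_lt h1 hj₀x
      have h2 : α p * x ≤ β p + ρ := hx p
      have h3 : x ≤ (β p + ρ) / α p := (le_div_iff₀ hp).mpr (by linarith)
      have h4 : (β p + ρ) / α p = β p / α p + (α p)⁻¹ * ρ := by
        field_simp
      have h5 : x - β p / α p ≤ (α p)⁻¹ * ρ := by rw [h4] at h3; linarith
      have h6 : (α p)⁻¹ * ρ ≤ K₂ * ρ :=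
        mul_le_mul_of_nonneg_right (le_trans (le_abs_self _) (hK p)) hρ
      rw [abs_of_pos (by linarith : (0:ℝ) < x - β p / α p)]
      linarith
  · by_cases hB : ∃ j, α j < 0 ∧ x < β j / α j
    · obtain ⟨j₀, hj₀, hj₀x⟩ := hB
      set N := Finset.univ.filter (fun j => α j < 0) with hN
      obtain ⟨n, hnN, hnmax⟩ := N.exists_max_image (fun j => β j / α j)
        ⟨j₀, by simp [hN, hj₀]⟩
      have hn : α n < 0 := by simpa [hN] using hnN
      refine ⟨β n / α n, ?_, ?_⟩
      · intro j
        rcases lt_trichotomy (α j) 0 with hj | hj | hj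
        · have h1 : β j / α j ≤ β n / α n := hnmax j (by simp [hN, hj])
          have h2 := (div_le_iff_of_neg hj).mp h1
          linarith [h2]
        · simpa [hj] using hz j hj
        · have h1 : β n / α n ≤ β j / α j := hpn j n hj hn
          have h2 := (le_div_iff₀ hj).mp h1
          linarith [h2]
      · have h1 : β j₀ / α j₀ ≤ β n / α n := hnmax j₀ (by simp [hN, hj₀])
        have hlt : x < β n / α n := lt_of_lt_of_le hj₀x h1
        have h2 : α n * x ≤ β n + ρ := hx n
        have h3 : (β n + ρ) / α n ≤ x := (div_le_iff_of_neg hn).mpr (by linarith)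
        have h4 : (β n + ρ) / α n = β n / α n + (α n)⁻¹ * ρ := by
          field_simp
        have h5 : β n / α n - x ≤ -(α n)⁻¹ * ρ := by rw [h4] at h3; linarith
        have h6 : -(α n)⁻¹ * ρ ≤ K₂ * ρ :=
          mul_le_mul_of_nonneg_right (le_trans (neg_le_abs _) (hK n)) hρ
        rw [abs_of_neg (by linarith : x - β n / α n < 0)]
        linarith
    · refine ⟨x, ?_, by simp [mul_nonneg hK₂0 hρ]⟩
      intro j
      rcases lt_trichotomy (α j) 0 with hj | hj | hj
      · have h1 : ¬ (x < β j / α j) := fun h => hB ⟨j, hj, h⟩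
        push_neg at h1
        have h2 := (div_le_iff_of_neg hj).mp h1
        linarith [h2]
      · simpa [hj] using hz j hj
      · have h1 : ¬ (β j / α j < x) := fun h => hA ⟨j, hj, h⟩
        push_neg at h1
        have h2 := (le_div_iff₀ hj).mp h1
        linarith [h2]


set_option maxHeartbeats 1000000 in
lemma hoffman : ∀ (d : ℕ) (ι : Type) [Fintype ι] (a : ι → Fin d → ℝ) (c : ι → ℝ),
    (∃ x : Fin d → ℝ, ∀ j, ∑ i, a j i * x i ≤ c j) →
    ∃ H : ℝ, 0 ≤ H ∧ ∀ (x : Fin d → ℝ) (r : ℝ), 0 ≤ r →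
      (∀ j, ∑ i, a j i * x i ≤ c j + r) →
      ∃ y, (∀ j, ∑ i, a j i * y i ≤ c j) ∧ dist x y ≤ H * r := by
  intro d
  induction d with
  | zero =>
    intro ι _ a c ⟨x₀, h₀⟩
    refine ⟨0, le_refl _, fun x r hr _ => ⟨x, fun j => ?_, by simp⟩⟩
    simpa using h₀ j
  | succ d IH =>
    intro ι _ a c ⟨x₀, h₀⟩
    classical
    set α : ι → ℝ := fun j => a j (Fin.last d) with hα
    have hsplit : ∀ (j : ι) (z : Fin (d + 1) → ℝ),
        ∑ i, a j i * z i
          = (∑ i : Fin d, a j i.castSucc * z i.castSucc) + α j * z (Fin.last d) :=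
      fun j z => Fin.sum_univ_castSucc (fun i => a j i * z i)
    -- new index type after Fourier–Motzkin elimination
    let ι' : Type := {j : ι // α j = 0} ⊕ ({p : ι // 0 < α p} × {n : ι // α n < 0})
    let A : ι' → Fin d → ℝ := Sum.elim (fun j i => a j.1 i.castSucc)
      (fun pn i => a pn.1.1 i.castSucc / α pn.1.1 - a pn.2.1 i.castSucc / α pn.2.1)
    let C : ι' → ℝ := Sum.elim (fun j => c j.1)
      (fun pn => c pn.1.1 / α pn.1.1 - c pn.2.1 / α pn.2.1)
    have hAsum : ∀ (p n : ι) (z : Fin d → ℝ),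
        (∑ i, (a p i.castSucc / α p - a n i.castSucc / α n) * z i)
          = (∑ i, a p i.castSucc * z i) / α p - (∑ i, a n i.castSucc * z i) / α n := by
      intro p n z
      rw [Finset.sum_div, Finset.sum_div, ← Finset.sum_sub_distrib]
      congr 1; ext i; ring
    -- constants
    set K₂ : ℝ := ∑ j, |(α j)⁻¹| with hK₂
    have hK₂0 : 0 ≤ K₂ := Finset.sum_nonneg fun j _ => abs_nonneg _
    set K : ℝ := 1 + K₂ with hKdef
    have hK1 : (1:ℝ) ≤ K := by simp [hKdef]; linarith
    have hK0 : (0:ℝ) ≤ K := by linarith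
    have hKj : ∀ j, |(α j)⁻¹| ≤ K₂ := by
      intro j; rw [hK₂]
      exact Finset.single_le_sum (f := fun j => |(α j)⁻¹|) (fun j _ => abs_nonneg _) (Finset.mem_univ j)
    have hpair : ∀ p n : ι, p ≠ n → |(α p)⁻¹| + |(α n)⁻¹| ≤ K₂ := by
      intro p n hne
      calc |(α p)⁻¹| + |(α n)⁻¹| = ∑ j ∈ ({p, n} : Finset ι), |(α j)⁻¹| :=
            (Finset.sum_pair (f := fun j => |(α j)⁻¹|) hne).symm
        _ ≤ ∑ j, |(α j)⁻¹| := Finset.sum_le_sum_of_subset_of_nonneg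
            (Finset.subset_univ _) (fun j _ _ => abs_nonneg _)
        _ = K₂ := hK₂.symm
    set M : ℝ := ∑ j, ∑ i : Fin d, |a j i.castSucc| with hM
    have hM0 : 0 ≤ M := Finset.sum_nonneg fun j _ =>
      Finset.sum_nonneg fun i _ => abs_nonneg _
    have hMj : ∀ j, ∑ i : Fin d, |a j i.castSucc| ≤ M := by
      intro j; rw [hM]
      exact Finset.single_le_sum (f := fun j => ∑ i : Fin d, |a j i.castSucc|)
        (fun j _ => Finset.sum_nonneg fun i _ => abs_nonneg _) (Finset.mem_univ j)
    -- the projected system is solvable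
    have hproj : ∀ (z : Fin (d+1) → ℝ) (r : ℝ), 0 ≤ r →
        (∀ j, ∑ i, a j i * z i ≤ c j + r) →
        ∀ j' : ι', ∑ i, A j' i * (fun i : Fin d => z i.castSucc) i ≤ C j' + K * r := by
      intro z r hr hz j'
      have hr' : r ≤ K * r := by nlinarith
      obtain ⟨j, hj⟩ | ⟨⟨p, hp⟩, ⟨n, hn⟩⟩ := j'
      · simp only [A, C, Sum.elim_inl]
        have := hsplit j z
        rw [hj, zero_mul, add_zero] at this
        rw [← this]
        linarith [hz j]
      · simp only [A, C, Sum.elim_inr]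
        rw [hAsum p n]
        have hTp : ∑ i : Fin d, a p i.castSucc * z i.castSucc
            = (∑ i, a p i * z i) - α p * z (Fin.last d) := by rw [hsplit p z]; ring
        have hTn : ∑ i : Fin d, a n i.castSucc * z i.castSucc
            = (∑ i, a n i * z i) - α n * z (Fin.last d) := by rw [hsplit n z]; ring
        have hpne : α p ≠ 0 := ne_of_gt hp
        have hnne : α n ≠ 0 := ne_of_lt hn
        have hdp : ((∑ i, a p i * z i) - α p * z (Fin.last d)) / α p
            = (∑ i, a p i * z i) / α p - z (Fin.last d) := by field_simp
        have hdn : ((∑ i, a n i * z i) - α n * z (Fin.last d)) / α n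
            = (∑ i, a n i * z i) / α n - z (Fin.last d) := by field_simp
        rw [hTp, hTn, hdp, hdn]
        -- now bound (Tp/αp - Tn/αn) ≤ cp/αp - cn/αn + K r
        have hgp : (∑ i, a p i * z i) ≤ c p + r := hz p
        have hgn : (∑ i, a n i * z i) ≤ c n + r := hz n
        have e1 : (∑ i, a p i * z i) * (α p)⁻¹ ≤ (c p + r) * (α p)⁻¹ :=
          mul_le_mul_of_nonneg_right hgp (inv_nonneg.mpr hp.le)
        have e2 : (c n + r) * (α n)⁻¹ ≤ (∑ i, a n i * z i) * (α n)⁻¹ :=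
          mul_le_mul_of_nonpos_right hgn (inv_nonpos.mpr hn.le)
        have e3 : (α p)⁻¹ = |(α p)⁻¹| := (abs_of_nonneg (inv_nonneg.mpr hp.le)).symm
        have e4 : -(α n)⁻¹ = |(α n)⁻¹| := by
          rw [abs_of_nonpos (inv_nonpos.mpr hn.le)]
        have hne : p ≠ n := by intro h; rw [h] at hp; linarith
        have e5 : |(α p)⁻¹| + |(α n)⁻¹| ≤ K₂ := hpair p n hne
        have e6 : r * (|(α p)⁻¹| + |(α n)⁻¹|) ≤ r * K₂ :=
          mul_le_mul_of_nonneg_left e5 hr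
        rw [div_eq_mul_inv, div_eq_mul_inv, div_eq_mul_inv, div_eq_mul_inv]
        have : c p * (α p)⁻¹ + r * (α p)⁻¹ - c n * (α n)⁻¹ - r * (α n)⁻¹
            = c p * (α p)⁻¹ - c n * (α n)⁻¹ + r * (|(α p)⁻¹| + |(α n)⁻¹|) := by
          rw [← e3, ← e4]; ring
        nlinarith [e1, e2, e6, this]
    obtain ⟨H', hH'0, hIH⟩ := IH ι' A C
      ⟨(fun i => x₀ i.castSucc), by
        have := hproj x₀ 0 (le_refl 0) (by simpa using h₀)
        simpa using this⟩
    refine ⟨max (H' * K) (K₂ * (1 + M * (H' * K))),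
      le_trans (mul_nonneg hH'0 hK0) (le_max_left _ _), ?_⟩
    intro x r hr hx
    have hKr0 : 0 ≤ K * r := mul_nonneg hK0 hr
    obtain ⟨y', hy'c, hy'd⟩ := hIH (fun i => x i.castSucc) (K * r) hKr0 (hproj x r hr hx)
    set δ := dist (fun i : Fin d => x i.castSucc) y' with hδ
    have hδ0 : 0 ≤ δ := dist_nonneg
    set β : ι → ℝ := fun j => c j - ∑ i : Fin d, a j i.castSucc * y' i with hβ
    have hz : ∀ j, α j = 0 → 0 ≤ β j := by
      intro j hj
      have h1 := hy'c (Sum.inl ⟨j, hj⟩)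
      simp only [A, C, Sum.elim_inl] at h1
      simp only [hβ]
      linarith
    have hpn : ∀ p n, 0 < α p → α n < 0 → β n / α n ≤ β p / α p := by
      intro p n hp hn
      have h1 := hy'c (Sum.inr ⟨⟨p, hp⟩, ⟨n, hn⟩⟩)
      simp only [A, C, Sum.elim_inr] at h1
      rw [hAsum p n] at h1
      simp only [hβ]
      rw [sub_div, sub_div]
      linarith
    have hlast : ∀ j, α j * x (Fin.last d) ≤ β j + (r + M * δ) := by
      intro j
      have h1 := hsplit j x
      have h2 : ∑ i : Fin d, a j i.castSucc * y' i
            - ∑ i : Fin d, a j i.castSucc * x i.castSucc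
          = ∑ i : Fin d, a j i.castSucc * (y' i - x i.castSucc) := by
        rw [← Finset.sum_sub_distrib]; congr 1; ext i; ring
      have h3 : ∑ i : Fin d, a j i.castSucc * (y' i - x i.castSucc) ≤ M * δ := by
        calc ∑ i : Fin d, a j i.castSucc * (y' i - x i.castSucc)
            ≤ ∑ i : Fin d, |a j i.castSucc| * δ := by
              apply Finset.sum_le_sum
              intro i _
              have hb : |y' i - x i.castSucc| ≤ δ := by
                rw [← Real.dist_eq, hδ]
                exact le_trans (dist_le_pi_dist y' (fun i => x i.castSucc) i)
                  (le_of_eq (dist_comm _ _))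
              calc a j i.castSucc * (y' i - x i.castSucc)
                  ≤ |a j i.castSucc * (y' i - x i.castSucc)| := le_abs_self _
                _ = |a j i.castSucc| * |y' i - x i.castSucc| := abs_mul _ _
                _ ≤ |a j i.castSucc| * δ :=
                    mul_le_mul_of_nonneg_left hb (abs_nonneg _)
          _ = (∑ i : Fin d, |a j i.castSucc|) * δ := (Finset.sum_mul _ _ _).symm
          _ ≤ M * δ := mul_le_mul_of_nonneg_right (hMj j) hδ0
      have h4 := hx j
      simp only [hβ]
      linarith
    have hρ0 : 0 ≤ r + M * δ := by
      have := mul_nonneg hM0 hδ0; linarith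
    obtain ⟨t, htc, htb⟩ := dim1 α β hz hpn K₂ hK₂0 hKj (x (Fin.last d)) (r + M * δ) hρ0 hlast
    refine ⟨Fin.snoc y' t, ?_, ?_⟩
    · intro j
      rw [hsplit j]
      simp only [Fin.snoc_castSucc, Fin.snoc_last]
      have h1 := htc j
      simp only [hβ] at h1
      linarith
    · rw [dist_pi_le_iff (mul_nonneg
        (le_trans (mul_nonneg hH'0 hK0) (le_max_left _ _)) hr)]
      intro i
      refine Fin.lastCases ?_ ?_ i
      · simp only [Fin.snoc_last]
        rw [Real.dist_eq]
        have hδb : δ ≤ H' * (K * r) := hy'd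
        have h7 : K₂ * (r + M * δ) ≤ K₂ * (1 + M * (H' * K)) * r := by
          nlinarith [mul_le_mul_of_nonneg_left hδb (mul_nonneg hK₂0 hM0)]
        calc |x (Fin.last d) - t| ≤ K₂ * (r + M * δ) := htb
          _ ≤ K₂ * (1 + M * (H' * K)) * r := h7
          _ ≤ max (H' * K) (K₂ * (1 + M * (H' * K))) * r :=
              mul_le_mul_of_nonneg_right (le_max_right _ _) hr
      · intro i
        simp only [Fin.snoc_castSucc]
        calc dist (x i.castSucc) (y' i)
            ≤ δ := by
              rw [hδ]; exact dist_le_pi_dist (fun i => x i.castSucc) y' i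
          _ ≤ H' * (K * r) := hy'd
          _ = H' * K * r := by ring
          _ ≤ max (H' * K) (K₂ * (1 + M * (H' * K))) * r :=
              mul_le_mul_of_nonneg_right (le_max_left _ _) hr

/-- Hoffman-type error bound: for a polyhedral convex function attaining its minimum,
the sup-norm distance to the set of minimizers is bounded by a constant times the
suboptimality gap. -/
theorem stmt3 {d m : ℕ} (a : Fin (m + 1) → (Fin d → ℝ)) (c : Fin (m + 1) → ℝ)
    (f : (Fin d → ℝ) → ℝ)
    (hf : ∀ x, f x = Finset.univ.sup' Finset.univ_nonempty
        (fun j => (∑ i, a j i * x i) + c j))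
    (x₀ : Fin d → ℝ) (hx₀ : ∀ x, f x₀ ≤ f x) :
    ∃ H : ℝ, 0 ≤ H ∧ ∀ x : Fin d → ℝ,
      Metric.infDist x {s : Fin d → ℝ | ∀ x', f s ≤ f x'} ≤ H * (f x - f x₀) := by
  classical
  obtain ⟨H, hH0, hHb⟩ := hoffman d (Fin (m + 1)) a (fun j => f x₀ - c j)
    ⟨x₀, fun j => by
      have h1 : (∑ i, a j i * x₀ i) + c j ≤ f x₀ := by
        rw [hf x₀]
        exact Finset.le_sup' (f := fun j => (∑ i, a j i * x₀ i) + c j)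
          (Finset.mem_univ j)
      show (∑ i, a j i * x₀ i) ≤ f x₀ - c j
      linarith⟩
  refine ⟨H, hH0, fun x => ?_⟩
  have hr : 0 ≤ f x - f x₀ := by linarith [hx₀ x]
  obtain ⟨y, hy, hyd⟩ := hHb x (f x - f x₀) hr (fun j => by
    have h1 : (∑ i, a j i * x i) + c j ≤ f x := by
      rw [hf x]
      exact Finset.le_sup' (f := fun j => (∑ i, a j i * x i) + c j)
        (Finset.mem_univ j)
    show (∑ i, a j i * x i) ≤ (f x₀ - c j) + (f x - f x₀)
    linarith)
  have hyS : y ∈ {s : Fin d → ℝ | ∀ x', f s ≤ f x'} := by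
    simp only [Set.mem_setOf_eq]
    intro x'
    have hfy : f y ≤ f x₀ := by
      rw [hf y]
      apply Finset.sup'_le
      intro j _
      have h1 : (∑ i, a j i * y i) ≤ f x₀ - c j := hy j
      linarith
    exact le_trans hfy (hx₀ x')
  exact le_trans (Metric.infDist_le_dist_of_mem hyS) hyd
end

section
/- Every discrete loss ℓ : R → ℝ_{≥0}^Y with R finite is embedded by a polyhedral loss. Concretely, let n = |Y|, let risk_ℓ(p) = min_{r∈R} ⟨p, ℓ(r)⟩ be the Bayes risk, let C : ℝ^n → ℝ be the convex conjugate of −risk_ℓ (extended to be −∞ off Δ_Y), and define L : ℝ^n → ℝ^Y by L(u) = C(u)·𝟙 − u. Then (a) L(u)_y ≥ 0 for all u ∈ ℝ^n and y ∈ Y, (b) L is polyhedral, and (c) for all p ∈ Δ_Y, inf_{u∈ℝ^n} ⟨p, L(u)⟩ = risk_ℓ(p). -/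
/-!
For fixed `u`, the objective `p ↦ ⟨u, p⟩ + risk_ℓ(p)` defining `C(u)` is continuous on the compact
simplex, so its set of maximizers has an extreme point `p` (Krein–Milman). Such a `p` is the only
point of the simplex whose support lies in that of `p` and on which the actions optimal at `p` all
incur the same expected loss: along the line towards another such point both the simplex
constraints and the Bayes risk stay affine near `p`, so `p` would be the midpoint of two
maximizers. Only finitely many points arise as the unique solution of such a system (one per
support and set of actions), hence `C` is the maximum of finitely many affine functions
`u ↦ ⟨u, p⟩ + risk_ℓ(p)` and `L` is polyhedral. Nonnegativity comes from testing `C(u)` at the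
vertex `δ_y`, and the risk is matched at `u = -ℓ(r)` for `r` optimal at `p`.
-/

open Finset Filter Topology

lemma eq_zero_of_add_mem_of_sub_mem_of_mem_extremePoints {E : Type*} [AddCommGroup E]
    [Module ℝ E] {A : Set E} {x v : E} (hx : x ∈ A.extremePoints ℝ) (hadd : x + v ∈ A)
    (hsub : x - v ∈ A) : v = 0 :=
  add_eq_left.1 (hx.2 hadd hsub (mem_openSegment_add_sub x v))

lemma exists_pos_of_eventually_nhds_zero {P : ℝ → Prop} (h : ∀ᶠ t in 𝓝 0, P t) :
    ∃ ε > 0, P ε ∧ P (-ε) := by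
  obtain ⟨ε, hε, hP⟩ := Metric.eventually_nhds_iff.1 h
  refine ⟨ε / 2, by positivity, hP ?_, hP ?_⟩ <;> simp [abs_of_pos hε, hε]

lemma eventually_add_smul_mem_stdSimplex {Y : Type*} [Fintype Y] {p d : Y → ℝ}
    (hp : p ∈ stdSimplex ℝ Y) (hd : ∀ y, p y = 0 → d y = 0) (hd_sum : ∑ y, d y = 0) :
    ∀ᶠ t in 𝓝 (0 : ℝ), p + t • d ∈ stdSimplex ℝ Y := by
  have hnonneg : ∀ y, ∀ᶠ t in 𝓝 (0 : ℝ), 0 ≤ p y + t * d y := fun y => by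
    rcases (hp.1 y).eq_or_lt with hy | hy
    · exact .of_forall fun t => by simp [← hy, hd y hy.symm]
    · have : Tendsto (fun t : ℝ => p y + t * d y) (𝓝 0) (𝓝 (p y)) :=
        (by fun_prop : Continuous fun t : ℝ => p y + t * d y).tendsto' 0 _ (by simp)
      exact (this.eventually_const_lt hy).mono fun t => le_of_lt
  filter_upwards [eventually_all.2 hnonneg] with t ht
  refine ⟨ht, ?_⟩
  simp [sum_add_distrib, ← mul_sum, hp.2, hd_sum]

section

variable {Y R : Type*} [Fintype Y] (ℓ : R → Y → ℝ)

def activeSolutions (A : Set Y) (B : Set R) : Set (Y → ℝ) :=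
  {q ∈ stdSimplex ℝ Y | q.support ⊆ A ∧ ∃ c, ∀ r ∈ B, q ⬝ᵥ ℓ r = c}

def vertexCandidates : Set (Y → ℝ) :=
  ⋃ (A : Set Y) (B : Set R), {p | activeSolutions ℓ A B = {p}}

lemma vertexCandidates_finite [Finite R] : (vertexCandidates ℓ).Finite :=
  Set.finite_iUnion fun _ => Set.finite_iUnion fun _ =>
    Set.Subsingleton.finite fun _ hp _ hq => Set.singleton_injective (hp.symm.trans hq)

lemma vertexCandidates_subset_stdSimplex : vertexCandidates ℓ ⊆ stdSimplex ℝ Y := by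
  intro p hp
  obtain ⟨A, B, hAB⟩ := Set.mem_iUnion₂.1 hp
  exact (hAB.symm ▸ Set.mem_singleton p : p ∈ activeSolutions ℓ A B).1

variable [Fintype R] [Nonempty R]

noncomputable def bayesRisk (p : Y → ℝ) : ℝ :=
  univ.inf' univ_nonempty fun r => p ⬝ᵥ ℓ r

def optimalActions (p : Y → ℝ) : Set R :=
  {r | p ⬝ᵥ ℓ r = bayesRisk ℓ p}

lemma bayesRisk_le (p : Y → ℝ) (r : R) : bayesRisk ℓ p ≤ p ⬝ᵥ ℓ r :=
  inf'_le _ (mem_univ r)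

lemma exists_mem_optimalActions (p : Y → ℝ) : ∃ r, r ∈ optimalActions ℓ p := by
  obtain ⟨r, -, hr⟩ := exists_mem_eq_inf' univ_nonempty fun r => p ⬝ᵥ ℓ r
  exact ⟨r, hr.symm⟩

lemma bayesRisk_nonneg (hℓ : ∀ r y, 0 ≤ ℓ r y) {p : Y → ℝ} (hp : ∀ y, 0 ≤ p y) :
    0 ≤ bayesRisk ℓ p :=
  le_inf' _ _ fun r _ => sum_nonneg fun y _ => mul_nonneg (hp y) (hℓ r y)

lemma continuous_bayesRisk : Continuous (bayesRisk ℓ) :=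
  Continuous.finset_inf'_apply univ_nonempty fun r _ => by unfold dotProduct; fun_prop

/-- Near `p`, only the actions optimal at `p` matter, so along a direction in which they all
change by the same amount `δ` the Bayes risk is affine. -/
lemma eventually_bayesRisk_add_smul {p d : Y → ℝ} {δ : ℝ}
    (hd : ∀ r ∈ optimalActions ℓ p, d ⬝ᵥ ℓ r = δ) :
    ∀ᶠ t in 𝓝 (0 : ℝ), bayesRisk ℓ (p + t • d) = bayesRisk ℓ p + t * δ := by
  have hlin : ∀ (t : ℝ) r, (p + t • d) ⬝ᵥ ℓ r = p ⬝ᵥ ℓ r + t * d ⬝ᵥ ℓ r := fun t r => by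
    rw [add_dotProduct, smul_dotProduct, smul_eq_mul]
  have hle : ∀ r, ∀ᶠ t in 𝓝 (0 : ℝ), bayesRisk ℓ p + t * δ ≤ (p + t • d) ⬝ᵥ ℓ r := fun r => by
    by_cases hr : r ∈ optimalActions ℓ p
    · exact .of_forall fun t => by rw [hlin, hr, hd r hr]
    · have hlt : bayesRisk ℓ p < p ⬝ᵥ ℓ r := (bayesRisk_le ℓ p r).lt_of_ne (Ne.symm hr)
      have : Tendsto (fun t : ℝ => p ⬝ᵥ ℓ r + t * d ⬝ᵥ ℓ r - t * δ) (𝓝 0) (𝓝 (p ⬝ᵥ ℓ r)) :=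
        (by fun_prop : Continuous fun t : ℝ => p ⬝ᵥ ℓ r + t * d ⬝ᵥ ℓ r - t * δ).tendsto' 0 _
          (by simp)
      filter_upwards [this.eventually_const_lt hlt] with t ht
      rw [hlin]
      linarith
  obtain ⟨r₀, hr₀⟩ := exists_mem_optimalActions ℓ p
  filter_upwards [eventually_all.2 hle] with t ht
  refine le_antisymm ?_ (le_inf' _ _ fun r _ => ht r)
  calc bayesRisk ℓ (p + t • d) ≤ (p + t • d) ⬝ᵥ ℓ r₀ := bayesRisk_le ℓ _ r₀
    _ = bayesRisk ℓ p + t * δ := by rw [hlin, hr₀, hd r₀ hr₀]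

noncomputable def conjObjective (u p : Y → ℝ) : ℝ :=
  u ⬝ᵥ p + bayesRisk ℓ p

/-- The convex conjugate `(-risk_ℓ)^*`, with `-risk_ℓ` taken to be `+∞` off the simplex. -/
noncomputable def riskConjugate (u : Y → ℝ) : ℝ :=
  sSup (conjObjective ℓ u '' stdSimplex ℝ Y)

noncomputable def embeddingLoss (u : Y → ℝ) (y : Y) : ℝ :=
  riskConjugate ℓ u - u y

def IsPolyhedral (f : (Y → ℝ) → ℝ) : Prop :=
  ∃ (m : ℕ) (a : Fin (m + 1) → Y → ℝ) (c : Fin (m + 1) → ℝ),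
    ∀ u, f u = univ.sup' univ_nonempty fun j => a j ⬝ᵥ u + c j

def conjArgmax (u : Y → ℝ) : Set (Y → ℝ) :=
  {p ∈ stdSimplex ℝ Y | IsMaxOn (conjObjective ℓ u) (stdSimplex ℝ Y) p}

lemma mem_activeSolutions_self {p : Y → ℝ} (hp : p ∈ stdSimplex ℝ Y) :
    p ∈ activeSolutions ℓ p.support (optimalActions ℓ p) :=
  ⟨hp, subset_rfl, bayesRisk ℓ p, fun _ hr => hr⟩

lemma eq_of_mem_extremePoints_conjArgmax {u p q : Y → ℝ}
    (hp : p ∈ (conjArgmax ℓ u).extremePoints ℝ)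
    (hq : q ∈ activeSolutions ℓ p.support (optimalActions ℓ p)) : q = p := by
  obtain ⟨hpΔ, hpmax⟩ := hp.1
  obtain ⟨hqΔ, hsupp, c, hc⟩ := hq
  set d := q - p with hd_def
  have hd_supp : ∀ y, p y = 0 → d y = 0 := fun y hy => by
    have : q y = 0 := by_contra fun h => hsupp h hy
    simp [d, this, hy]
  have hd_sum : ∑ y, d y = 0 := by simp [d, sum_sub_distrib, hqΔ.2, hpΔ.2]
  have hd_loss : ∀ r ∈ optimalActions ℓ p, d ⬝ᵥ ℓ r = c - bayesRisk ℓ p := fun r hr => by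
    rw [hd_def, sub_dotProduct, hc r hr, hr]
  set K := u ⬝ᵥ d + (c - bayesRisk ℓ p)
  have hobj : ∀ t : ℝ, bayesRisk ℓ (p + t • d) = bayesRisk ℓ p + t * (c - bayesRisk ℓ p) →
      conjObjective ℓ u (p + t • d) = conjObjective ℓ u p + t * K := fun t ht => by
    simp only [conjObjective, ht, dotProduct_add, dotProduct_smul, smul_eq_mul, K]
    ring
  obtain ⟨ε, hε, ⟨hΔ_pos, hrisk_pos⟩, hΔ_neg, hrisk_neg⟩ := exists_pos_of_eventually_nhds_zero
    ((eventually_add_smul_mem_stdSimplex hpΔ hd_supp hd_sum).and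
      (eventually_bayesRisk_add_smul ℓ hd_loss))
  have hK : K = 0 := by
    have h_pos := isMaxOn_iff.1 hpmax _ hΔ_pos
    have h_neg := isMaxOn_iff.1 hpmax _ hΔ_neg
    rw [hobj ε hrisk_pos] at h_pos
    rw [hobj (-ε) hrisk_neg] at h_neg
    nlinarith
  have hmem : ∀ t : ℝ, p + t • d ∈ stdSimplex ℝ Y →
      bayesRisk ℓ (p + t • d) = bayesRisk ℓ p + t * (c - bayesRisk ℓ p) →
      p + t • d ∈ conjArgmax ℓ u := fun t hΔ hrisk =>
    ⟨hΔ, isMaxOn_iff.2 fun x hx => by rw [hobj t hrisk, hK, mul_zero, add_zero]; exact hpmax hx⟩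
  have hεd : ε • d = 0 := eq_zero_of_add_mem_of_sub_mem_of_mem_extremePoints hp
    (hmem ε hΔ_pos hrisk_pos)
    (by simpa [neg_smul, ← sub_eq_add_neg] using hmem (-ε) hΔ_neg hrisk_neg)
  exact sub_eq_zero.1 ((smul_eq_zero.1 hεd).resolve_left hε.ne')

lemma continuous_conjObjective (u : Y → ℝ) : Continuous (conjObjective ℓ u) :=
  (by unfold dotProduct; fun_prop : Continuous (u ⬝ᵥ ·)).add (continuous_bayesRisk ℓ)

lemma isCompact_conjArgmax (u : Y → ℝ) : IsCompact (conjArgmax ℓ u) := by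
  have : conjArgmax ℓ u = stdSimplex ℝ Y ∩
      ⋂ q ∈ stdSimplex ℝ Y, {p | conjObjective ℓ u q ≤ conjObjective ℓ u p} := by
    ext p
    simp [conjArgmax, isMaxOn_iff]
  rw [this]
  exact (isCompact_stdSimplex ℝ Y).inter_right
    (isClosed_biInter fun q _ => isClosed_le continuous_const (continuous_conjObjective ℓ u))

lemma exists_mem_vertexCandidates_isMaxOn [Nonempty Y] (u : Y → ℝ) :
    ∃ p ∈ vertexCandidates ℓ, IsMaxOn (conjObjective ℓ u) (stdSimplex ℝ Y) p := by
  obtain ⟨p₀, hp₀⟩ := (isCompact_stdSimplex ℝ Y).exists_isMaxOn .of_subtype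
    (continuous_conjObjective ℓ u).continuousOn
  obtain ⟨p, hp⟩ := (isCompact_conjArgmax ℓ u).extremePoints_nonempty ⟨p₀, hp₀⟩
  refine ⟨p, Set.mem_iUnion₂.2 ⟨p.support, optimalActions ℓ p, ?_⟩, hp.1.2⟩
  exact Set.eq_singleton_iff_unique_mem.2 ⟨mem_activeSolutions_self ℓ hp.1.1,
    fun q hq => eq_of_mem_extremePoints_conjArgmax ℓ hp hq⟩

lemma riskConjugate_eq_of_isMaxOn {u p : Y → ℝ} (hp : p ∈ stdSimplex ℝ Y)
    (hmax : IsMaxOn (conjObjective ℓ u) (stdSimplex ℝ Y) p) :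
    riskConjugate ℓ u = conjObjective ℓ u p :=
  IsGreatest.csSup_eq ⟨Set.mem_image_of_mem _ hp, Set.forall_mem_image.2 hmax⟩

lemma conjObjective_le_riskConjugate [Nonempty Y] (u : Y → ℝ) {q : Y → ℝ}
    (hq : q ∈ stdSimplex ℝ Y) : conjObjective ℓ u q ≤ riskConjugate ℓ u := by
  obtain ⟨p, hp, hmax⟩ := exists_mem_vertexCandidates_isMaxOn ℓ u
  rw [riskConjugate_eq_of_isMaxOn ℓ (vertexCandidates_subset_stdSimplex ℓ hp) hmax]
  exact hmax hq

lemma riskConjugate_le [Nonempty Y] {u : Y → ℝ} {b : ℝ}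
    (h : ∀ q ∈ stdSimplex ℝ Y, conjObjective ℓ u q ≤ b) : riskConjugate ℓ u ≤ b :=
  csSup_le (Set.image_nonempty.2 .of_subtype) (Set.forall_mem_image.2 h)

lemma embeddingLoss_nonneg (hℓ : ∀ r y, 0 ≤ ℓ r y) (u : Y → ℝ) (y : Y) :
    0 ≤ embeddingLoss ℓ u y := by
  classical
  have : Nonempty Y := ⟨y⟩
  have hle := conjObjective_le_riskConjugate ℓ u (single_mem_stdSimplex ℝ y)
  have hrisk := bayesRisk_nonneg ℓ hℓ (single_mem_stdSimplex ℝ y).1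
  simp only [conjObjective, dotProduct_single, mul_one] at hle
  simp only [embeddingLoss]
  linarith

lemma isPolyhedral_embeddingLoss (y : Y) : IsPolyhedral (embeddingLoss ℓ · y) := by
  classical
  have : Nonempty Y := ⟨y⟩
  obtain ⟨n, e, he⟩ := (vertexCandidates_finite ℓ).fin_embedding
  obtain ⟨m, rfl⟩ : ∃ m, n = m + 1 := Nat.exists_eq_succ_of_ne_zero <| by
    rintro rfl
    obtain ⟨p, hp, -⟩ := exists_mem_vertexCandidates_isMaxOn ℓ 0
    simp [← he] at hp
  refine ⟨m, fun j => e j - Pi.single y 1, fun j => bayesRisk ℓ (e j), fun u => ?_⟩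
  have hpiece : ∀ j, (e j - Pi.single y 1) ⬝ᵥ u + bayesRisk ℓ (e j) =
      conjObjective ℓ u (e j) - u y := fun j => by
    simp only [conjObjective, sub_dotProduct, single_dotProduct, one_mul, dotProduct_comm u]
    ring
  simp only [hpiece, embeddingLoss]
  refine le_antisymm ?_ (sup'_le _ _ fun j _ => sub_le_sub_right
    (conjObjective_le_riskConjugate ℓ u (vertexCandidates_subset_stdSimplex ℓ
      (he ▸ Set.mem_range_self j))) _)
  obtain ⟨p, hp, hmax⟩ := exists_mem_vertexCandidates_isMaxOn ℓ u
  obtain ⟨j, rfl⟩ : p ∈ Set.range e := he ▸ hp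
  rw [riskConjugate_eq_of_isMaxOn ℓ (vertexCandidates_subset_stdSimplex ℓ hp) hmax]
  exact le_sup' (fun j => conjObjective ℓ u (e j) - u y) (mem_univ j)

lemma dotProduct_embeddingLoss {p : Y → ℝ} (hp : p ∈ stdSimplex ℝ Y) (u : Y → ℝ) :
    p ⬝ᵥ embeddingLoss ℓ u = riskConjugate ℓ u - p ⬝ᵥ u := by
  simp only [dotProduct, embeddingLoss, mul_sub, sum_sub_distrib, ← sum_mul, hp.2, one_mul]

lemma isLeast_dotProduct_embeddingLoss {p : Y → ℝ} (hp : p ∈ stdSimplex ℝ Y) :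
    IsLeast (Set.range fun u => p ⬝ᵥ embeddingLoss ℓ u) (bayesRisk ℓ p) := by
  have : Nonempty Y := by
    by_contra h
    simpa [not_nonempty_iff.1 h] using hp.2
  have hlower : ∀ u, bayesRisk ℓ p ≤ p ⬝ᵥ embeddingLoss ℓ u := fun u => by
    have := conjObjective_le_riskConjugate ℓ u hp
    rw [conjObjective, dotProduct_comm] at this
    rw [dotProduct_embeddingLoss ℓ hp]
    linarith
  obtain ⟨r, hr⟩ := exists_mem_optimalActions ℓ p
  refine ⟨⟨-ℓ r, le_antisymm ?_ (hlower _)⟩, Set.forall_mem_range.2 hlower⟩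
  have hC : riskConjugate ℓ (-ℓ r) ≤ 0 := riskConjugate_le ℓ fun q _ => by
    simpa [conjObjective, dotProduct_comm q] using bayesRisk_le ℓ q r
  show p ⬝ᵥ embeddingLoss ℓ (-ℓ r) ≤ _
  rw [dotProduct_embeddingLoss ℓ hp, dotProduct_neg, hr]
  linarith

end

/-- Every discrete loss is embedded by a polyhedral loss: the conjugate construction
`L(u) = C(u)·𝟙 − u` with `C = (−risk_ℓ)^*` is (a) nonnegative, (b) polyhedral, and
(c) has the same Bayes risk as `ℓ`. -/
theorem stmt4 {Y R : Type*} [Fintype Y] [Fintype R] [Nonempty R]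
    (ℓ : R → Y → ℝ) (hℓ : ∀ r y, 0 ≤ ℓ r y)
    (risk : (Y → ℝ) → ℝ)
    (hrisk : ∀ p, risk p = Finset.univ.inf' Finset.univ_nonempty
        (fun r => ∑ y, p y * ℓ r y))
    (C : (Y → ℝ) → ℝ)
    (hC : ∀ u, C u = sSup {t : ℝ | ∃ p : Y → ℝ, (∀ y, 0 ≤ p y) ∧ (∑ y, p y) = 1 ∧
        t = (∑ y, u y * p y) + risk p})
    (L : (Y → ℝ) → Y → ℝ)
    (hLdef : ∀ u y, L u y = C u - u y) :
    (∀ u y, 0 ≤ L u y) ∧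
    (∀ y : Y, ∃ (m : ℕ) (a : Fin (m + 1) → (Y → ℝ)) (c : Fin (m + 1) → ℝ),
      ∀ u, L u y = Finset.univ.sup' Finset.univ_nonempty
        (fun j => (∑ i, a j i * u i) + c j)) ∧
    (∀ p : Y → ℝ, (∀ y, 0 ≤ p y) → (∑ y, p y) = 1 →
      sInf {t : ℝ | ∃ u : Y → ℝ, t = ∑ y, p y * L u y} = risk p) := by
  obtain rfl : risk = bayesRisk ℓ := funext hrisk
  obtain rfl : C = riskConjugate ℓ := funext fun u => by
    rw [hC, riskConjugate, Set.image]
    congr 1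
    ext t
    simp only [stdSimplex, Set.mem_ofPred_eq, conjObjective, dotProduct, and_assoc, eq_comm]
  obtain rfl : L = embeddingLoss ℓ := funext fun u => funext (hLdef u)
  refine ⟨embeddingLoss_nonneg ℓ hℓ, isPolyhedral_embeddingLoss ℓ, fun p hp hp_sum => ?_⟩
  rw [← (isLeast_dotProduct_embeddingLoss ℓ ⟨hp, hp_sum⟩).csInf_eq]
  congr 1
  ext t
  simp only [Set.mem_ofPred_eq, Set.mem_range, dotProduct, eq_comm]
end

section
/- Let ℓ_{0-1} : {−1,1} → ℝ_{≥0}^{{−1,1}} be binary 0-1 loss, ℓ_{0-1}(r)_y = 1 if r ≠ y and 0 otherwise, and let hinge loss L : ℝ → ℝ_{≥0}^{{−1,1}} be L(u)_y = max(0, 1 − y·u). Then for every probability distribution p = (p_{-1}, p_1) on {−1,1}, inf_{u∈ℝ} ⟨p, L(u)⟩ = 2 · min_{r∈{−1,1}} ⟨p, ℓ_{0-1}(r)⟩ = 2·min(p_{-1}, p_1). -/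
/-- Hinge loss's Bayes risk is twice the Bayes risk of binary 0-1 loss:
`inf_u ⟨p, L_hinge(u)⟩ = 2·min_r ⟨p, ℓ_{0-1}(r)⟩ = 2·min(p₋₁, p₁)`. -/
theorem stmt5 (pn p1 : ℝ) (h0 : 0 ≤ pn) (h1 : 0 ≤ p1) (hs : pn + p1 = 1) :
    sInf {t : ℝ | ∃ u : ℝ, t = pn * max 0 (1 + u) + p1 * max 0 (1 - u)}
        = 2 * min pn p1 ∧
    min (pn * 0 + p1 * 1) (pn * 1 + p1 * 0) = min pn p1 := by
  constructor
  · apply le_antisymm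
    · apply csInf_le
      · refine ⟨2 * min pn p1, ?_⟩
        rintro t ⟨u, rfl⟩
        have ha1 : (1 + u) ≤ max 0 (1 + u) := le_max_right _ _
        have ha0 : (0:ℝ) ≤ max 0 (1 + u) := le_max_left _ _
        have hb1 : (1 - u) ≤ max 0 (1 - u) := le_max_right _ _
        have hb0 : (0:ℝ) ≤ max 0 (1 - u) := le_max_left _ _
        rcases le_total pn p1 with h | h
        · rw [min_eq_left h]; nlinarith
        · rw [min_eq_right h]; nlinarith
      · rcases le_total pn p1 with h | h
        · rw [min_eq_left h]
          exact ⟨1, by norm_num; ring⟩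
        · rw [min_eq_right h]
          exact ⟨-1, by norm_num; ring⟩
    · refine le_csInf ⟨_, 0, rfl⟩ ?_
      rintro t ⟨u, rfl⟩
      have ha1 : (1 + u) ≤ max 0 (1 + u) := le_max_right _ _
      have ha0 : (0:ℝ) ≤ max 0 (1 + u) := le_max_left _ _
      have hb1 : (1 - u) ≤ max 0 (1 - u) := le_max_right _ _
      have hb0 : (0:ℝ) ≤ max 0 (1 - u) := le_max_left _ _
      rcases le_total pn p1 with h | h
      · rw [min_eq_left h]; nlinarith
      · rw [min_eq_right h]; nlinarith
  · rw [min_comm]; norm_num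
end

section
/- For binary hinge loss L(u)_y = max(0, 1 − y·u) with y ∈ {−1,1}, and p = (p_{-1}, p_1) in the probability simplex: the set of minimizers of u ↦ ⟨p, L(u)⟩ is [1,∞) if p_1 = 1; {1} if 1/2 < p_1 < 1; [−1,1] if p_1 = 1/2; {−1} if 0 < p_1 < 1/2; and (−∞,−1] if p_1 = 0. -/
/-- Full characterization of the minimizer set of expected binary hinge loss. -/
theorem stmt6 (pn p1 : ℝ) (h0 : 0 ≤ pn) (h1 : 0 ≤ p1) (hs : pn + p1 = 1)
    (f : ℝ → ℝ) (hf : ∀ u, f u = pn * max 0 (1 + u) + p1 * max 0 (1 - u)) :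
    (p1 = 1 → {u : ℝ | ∀ u', f u ≤ f u'} = Set.Ici (1 : ℝ)) ∧
    (1 / 2 < p1 → p1 < 1 → {u : ℝ | ∀ u', f u ≤ f u'} = {(1 : ℝ)}) ∧
    (p1 = 1 / 2 → {u : ℝ | ∀ u', f u ≤ f u'} = Set.Icc (-1 : ℝ) 1) ∧
    (0 < p1 → p1 < 1 / 2 → {u : ℝ | ∀ u', f u ≤ f u'} = {(-1 : ℝ)}) ∧
    (p1 = 0 → {u : ℝ | ∀ u', f u ≤ f u'} = Set.Iic (-1 : ℝ)) := by
  have hpn : pn = 1 - p1 := by linarith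
  subst hpn
  -- value of f at 1 and -1
  have hf1 : f 1 = 2 * (1 - p1) := by
    rw [hf]; norm_num; ring
  have hfm1 : f (-1) = 2 * p1 := by
    rw [hf]; norm_num; ring
  refine ⟨?_, ?_, ?_, ?_, ?_⟩
  · -- p1 = 1
    intro hp
    subst hp
    ext u
    simp only [Set.mem_setOf_eq, Set.mem_Ici]
    constructor
    · intro h
      have h1 := h 1
      rw [hf1] at h1
      rw [hf] at h1
      nlinarith [le_max_right (0:ℝ) (1-u), le_max_left (0:ℝ) (1+u)]
    · intro hu u'
      rw [hf, hf]
      have e1 : max 0 (1-u) = 0 := max_eq_left (by linarith)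
      rw [e1]
      nlinarith [le_max_left (0:ℝ) (1-u')]
  · -- 1/2 < p1 < 1
    intro hl hr
    ext u
    simp only [Set.mem_setOf_eq, Set.mem_singleton_iff]
    constructor
    · intro h
      have h2 := h 1
      rw [hf1, hf] at h2
      rcases le_total u (-1) with hu | hu
      · rw [max_eq_left (by linarith : (1:ℝ)+u ≤ 0),
            max_eq_right (by linarith : (0:ℝ) ≤ 1-u)] at h2
        nlinarith
      · rcases le_total u 1 with hu2 | hu2
        · rw [max_eq_right (by linarith : (0:ℝ) ≤ 1+u),
              max_eq_right (by linarith : (0:ℝ) ≤ 1-u)] at h2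
          nlinarith
        · rw [max_eq_right (by linarith : (0:ℝ) ≤ 1+u),
              max_eq_left (by linarith : (1:ℝ)-u ≤ 0)] at h2
          nlinarith
    · intro hu u'
      subst hu
      rw [hf1, hf]
      rcases le_total u' (-1) with hu | hu
      · rw [max_eq_left (by linarith : (1:ℝ)+u' ≤ 0),
            max_eq_right (by linarith : (0:ℝ) ≤ 1-u')]
        nlinarith
      · rcases le_total u' 1 with hu2 | hu2
        · rw [max_eq_right (by linarith : (0:ℝ) ≤ 1+u'),
              max_eq_right (by linarith : (0:ℝ) ≤ 1-u')]
          nlinarith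
        · rw [max_eq_right (by linarith : (0:ℝ) ≤ 1+u'),
              max_eq_left (by linarith : (1:ℝ)-u' ≤ 0)]
          nlinarith
  · -- p1 = 1/2
    intro hp
    subst hp
    ext u
    simp only [Set.mem_setOf_eq, Set.mem_Icc]
    constructor
    · intro h
      have h2 := h 1
      rw [hf1, hf] at h2
      constructor
      · rcases le_total u (-1) with hu | hu
        · rw [max_eq_left (by linarith : (1:ℝ)+u ≤ 0),
              max_eq_right (by linarith : (0:ℝ) ≤ 1-u)] at h2
          linarith
        · linarith
      · rcases le_total u 1 with hu | hu
        · linarith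
        · rw [max_eq_right (by linarith : (0:ℝ) ≤ 1+u),
              max_eq_left (by linarith : (1:ℝ)-u ≤ 0)] at h2
          linarith
    · intro hu u'
      rw [hf, hf]
      rw [max_eq_right (by linarith [hu.1] : (0:ℝ) ≤ 1+u),
          max_eq_right (by linarith [hu.2] : (0:ℝ) ≤ 1-u)]
      nlinarith [le_max_right (0:ℝ) (1+u'), le_max_right (0:ℝ) (1-u')]
  · -- 0 < p1 < 1/2
    intro hl hr
    ext u
    simp only [Set.mem_setOf_eq, Set.mem_singleton_iff]
    constructor
    · intro h
      have h2 := h (-1)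
      rw [hfm1, hf] at h2
      rcases le_total u (-1) with hu | hu
      · rw [max_eq_left (by linarith : (1:ℝ)+u ≤ 0),
            max_eq_right (by linarith : (0:ℝ) ≤ 1-u)] at h2
        nlinarith
      · rcases le_total u 1 with hu2 | hu2
        · rw [max_eq_right (by linarith : (0:ℝ) ≤ 1+u),
              max_eq_right (by linarith : (0:ℝ) ≤ 1-u)] at h2
          nlinarith
        · rw [max_eq_right (by linarith : (0:ℝ) ≤ 1+u),
              max_eq_left (by linarith : (1:ℝ)-u ≤ 0)] at h2
          nlinarith
    · intro hu u'
      subst hu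
      rw [hfm1, hf]
      rcases le_total u' (-1) with hu | hu
      · rw [max_eq_left (by linarith : (1:ℝ)+u' ≤ 0),
            max_eq_right (by linarith : (0:ℝ) ≤ 1-u')]
        nlinarith
      · rcases le_total u' 1 with hu2 | hu2
        · rw [max_eq_right (by linarith : (0:ℝ) ≤ 1+u'),
              max_eq_right (by linarith : (0:ℝ) ≤ 1-u')]
          nlinarith
        · rw [max_eq_right (by linarith : (0:ℝ) ≤ 1+u'),
              max_eq_left (by linarith : (1:ℝ)-u' ≤ 0)]
          nlinarith
  · -- p1 = 0
    intro hp
    subst hp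
    ext u
    simp only [Set.mem_setOf_eq, Set.mem_Iic]
    constructor
    · intro h
      have h2 := h (-1)
      rw [hfm1, hf] at h2
      nlinarith [le_max_right (0:ℝ) (1+u), le_max_left (0:ℝ) (1-u)]
    · intro hu u'
      rw [hf, hf]
      have e1 : max 0 (1+u) = 0 := max_eq_left (by linarith)
      rw [e1]
      nlinarith [le_max_left (0:ℝ) (1+u')]
end

section
/- Let D ⊆ ℝ^d be a closed convex polyhedron (a finite intersection of closed halfspaces) and ε > 0. Then there exists an open convex set D′ that is a finite intersection of open halfspaces such that D ⊆ D′ ⊆ B(D, ε), where B(D, ε) = {u : inf_{x∈D} ‖u − x‖ < ε}. -/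
open scoped InnerProductSpace Topology
open Filter Set Metric Finset WithLp

/-!
Hoffman's bound: there is `C` such that every `x` lies within `C · ∑ⱼ (⟪a j, x⟫ - b j)⁺` of the
polyhedron `P = {x | ∀ j, ⟪a j, x⟫ ≤ b j}`, so relaxing all constraints strictly by a small `δ`
stays inside the `ε`-neighbourhood of `P`. To prove the bound, let `y` be the point of `P`
nearest to `x`. Then `x - y` lies in the polar of the cone of directions feasible at `y`, which is
cut out by the constraints active at `y`; on that closed cone, compactness of the unit sphere gives
`c ‖v‖ ≤ ∑ⱼ ⟪a j, v⟫⁺` over the active `j`, and for those `⟪a j, x - y⟫ ≤ ⟪a j, x⟫ - b j`.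
The Euclidean distance dominates the sup distance, so the bound transfers to `Fin d → ℝ`.
-/

theorem LipschitzWith.infDist_image_le {α β : Type*} [PseudoMetricSpace α] [PseudoMetricSpace β]
    {f : α → β} (hf : LipschitzWith 1 f) (x : α) (s : Set α) :
    infDist (f x) (f '' s) ≤ infDist x s := by
  rcases s.eq_empty_or_nonempty with rfl | hs
  · simp
  refine le_of_forall_gt fun r hr => ?_
  obtain ⟨y, hy, hxy⟩ := (infDist_lt_iff hs).1 hr
  calc infDist (f x) (f '' s) ≤ dist (f x) (f y) := infDist_le_dist_of_mem (mem_image_of_mem f hy)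
    _ ≤ dist x y := by simpa using hf.dist_le_mul x y
    _ < r := hxy

theorem exists_pos_mul_norm_le_of_isClosed_cone {F : Type*} [NormedAddCommGroup F]
    [NormedSpace ℝ F] [ProperSpace F] {K : Set F} (hK : IsClosed K)
    (hK_smul : ∀ v ∈ K, ∀ t : ℝ, 0 < t → t • v ∈ K) {g : F → ℝ} (hg : Continuous g)
    (hg_smul : ∀ v, ∀ t : ℝ, 0 < t → g (t • v) = t * g v) (hg_pos : ∀ v ∈ K, v ≠ 0 → 0 < g v) :
    ∃ c > 0, ∀ v ∈ K, c * ‖v‖ ≤ g v := by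
  obtain ⟨c, hc, hcg⟩ := (isCompact_sphere (0 : F) 1).inter_left hK |>.exists_forall_le'
    hg.continuousOn fun v hv => hg_pos v hv.1 (ne_zero_of_mem_unit_sphere ⟨v, hv.2⟩)
  refine ⟨c, hc, fun v hv => ?_⟩
  rcases eq_or_ne v 0 with rfl | hv0
  · have : g 0 = 2 * g 0 := by simpa using hg_smul 0 2 two_pos
    simp only [norm_zero, mul_zero]; linarith
  have hnorm : 0 < ‖v‖ := norm_pos_iff.2 hv0
  have := hcg (‖v‖⁻¹ • v) ⟨hK_smul v hv _ (inv_pos.2 hnorm), by simp [norm_smul, hnorm.ne']⟩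
  rw [hg_smul v _ (inv_pos.2 hnorm), le_inv_mul_iff₀ hnorm] at this
  linarith

section Polyhedron

variable {E ι : Type*} [NormedAddCommGroup E] [InnerProductSpace ℝ E]

def polyhedron (a : ι → E) (b : ι → ℝ) : Set E := {x | ∀ j, ⟪a j, x⟫_ℝ ≤ b j}

theorem convex_polyhedron (a : ι → E) (b : ι → ℝ) : Convex ℝ (polyhedron a b) := by
  rw [polyhedron, ofPred_forall]
  exact convex_iInter fun j => convex_halfSpace_le (innerₛₗ ℝ (a j)).isLinear (b j)

theorem isClosed_polyhedron (a : ι → E) (b : ι → ℝ) : IsClosed (polyhedron a b) := by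
  rw [polyhedron, ofPred_forall]
  exact isClosed_iInter fun j => isClosed_le (by fun_prop) continuous_const

theorem eventually_add_smul_mem_polyhedron [Finite ι] {a : ι → E} {b : ι → ℝ} {y w : E}
    (hy : y ∈ polyhedron a b) (hw : ∀ j, b j ≤ ⟪a j, y⟫_ℝ → ⟪a j, w⟫_ℝ ≤ 0) :
    ∀ᶠ t in 𝓝[>] (0 : ℝ), y + t • w ∈ polyhedron a b := by
  refine eventually_all.2 fun j => ?_
  simp only [inner_add_right, real_inner_smul_right]
  by_cases hj : b j ≤ ⟪a j, y⟫_ℝ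
  · filter_upwards [self_mem_nhdsWithin] with t ht
    nlinarith [hw j hj, hy j, mem_Ioi.1 ht]
  · have hlim : Tendsto (fun t : ℝ => ⟪a j, y⟫_ℝ + t * ⟪a j, w⟫_ℝ) (𝓝[>] 0) (𝓝 ⟪a j, y⟫_ℝ) := by
      have hcont : Continuous fun t : ℝ => ⟪a j, y⟫_ℝ + t * ⟪a j, w⟫_ℝ := by fun_prop
      simpa using (hcont.tendsto 0).mono_left nhdsWithin_le_nhds
    exact (hlim.eventually_lt_const (not_le.1 hj)).mono fun _ => le_of_lt

theorem exists_pos_mul_norm_le_sum_max_inner [FiniteDimensional ℝ E] (a : ι → E)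
    (I : Finset ι) :
    ∃ c > 0, ∀ v, (∀ w, (∀ j ∈ I, ⟪a j, w⟫_ℝ ≤ 0) → ⟪v, w⟫_ℝ ≤ 0) →
      c * ‖v‖ ≤ ∑ j ∈ I, max ⟪a j, v⟫_ℝ 0 := by
  refine exists_pos_mul_norm_le_of_isClosed_cone
    (K := {v | ∀ w, (∀ j ∈ I, ⟪a j, w⟫_ℝ ≤ 0) → ⟪v, w⟫_ℝ ≤ 0}) ?_ ?_ (by fun_prop) ?_ ?_
  · simp only [ofPred_forall]
    exact isClosed_iInter fun w => isClosed_iInter fun _ =>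
      isClosed_le (by fun_prop) continuous_const
  · intro v hv t ht w hw
    rw [real_inner_smul_left]
    exact mul_nonpos_of_nonneg_of_nonpos ht.le (hv w hw)
  · intro v t ht
    simp only [real_inner_smul_right, Finset.mul_sum, mul_max_of_nonneg _ _ ht.le, mul_zero]
  · intro v hv hv0
    by_contra! hsum
    have hzero := (sum_eq_zero_iff_of_nonneg fun j _ => le_max_right ⟪a j, v⟫_ℝ 0).1
      (hsum.antisymm (sum_nonneg fun _ _ => le_max_right _ _))
    -- `v` then lies in the cone it is polar to, so `⟪v, v⟫ ≤ 0`
    exact hv0 (real_inner_self_nonpos.1 (hv v fun j hj => max_eq_right_iff.1 (hzero j hj)))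

/-- Hoffman's error bound for a system of linear inequalities. -/
theorem exists_infDist_polyhedron_le [FiniteDimensional ℝ E] [Fintype ι] (a : ι → E)
    (b : ι → ℝ) :
    ∃ C ≥ 0, ∀ x, infDist x (polyhedron a b) ≤ C * ∑ j, max (⟪a j, x⟫_ℝ - b j) 0 := by
  choose c hc_pos hc using exists_pos_mul_norm_le_sum_max_inner a
  obtain ⟨I₀, hI₀⟩ := Finite.exists_min c
  refine ⟨(c I₀)⁻¹, inv_nonneg.2 (hc_pos I₀).le, fun x => ?_⟩
  rcases (polyhedron a b).eq_empty_or_nonempty with hP | hP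
  · rw [hP, infDist_empty]
    have := hc_pos I₀
    positivity
  obtain ⟨y, hyP, hy⟩ := exists_norm_eq_iInf_of_complete_convex hP
    (isClosed_polyhedron a b).isComplete (convex_polyhedron a b) x
  set I := univ.filter fun j => b j ≤ ⟪a j, y⟫_ℝ
  have hnormal : ∀ w, (∀ j ∈ I, ⟪a j, w⟫_ℝ ≤ 0) → ⟪x - y, w⟫_ℝ ≤ 0 := by
    intro w hw
    obtain ⟨t, hmem, ht⟩ := ((eventually_add_smul_mem_polyhedron hyP fun j hj =>
      hw j (mem_filter.2 ⟨mem_univ j, hj⟩)).and self_mem_nhdsWithin).exists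
    have := (norm_eq_iInf_iff_real_inner_le_zero (convex_polyhedron a b) hyP).1 hy _ hmem
    rw [add_sub_cancel_left, real_inner_smul_right] at this
    exact nonpos_of_mul_nonpos_right this ht
  have hactive : ∑ j ∈ I, max ⟪a j, x - y⟫_ℝ 0 ≤ ∑ j, max (⟪a j, x⟫_ℝ - b j) 0 := by
    refine (sum_le_sum fun j hj => max_le_max_right 0 ?_).trans
      (sum_le_sum_of_subset_of_nonneg (subset_univ I) fun _ _ _ => le_max_right _ _)
    rw [inner_sub_right]
    linarith [(mem_filter.1 hj).2]
  rw [le_inv_mul_iff₀ (hc_pos I₀)]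
  calc c I₀ * infDist x (polyhedron a b) ≤ c I * ‖x - y‖ :=
        mul_le_mul (hI₀ I) ((infDist_le_dist_of_mem hyP).trans_eq (dist_eq_norm x y))
          infDist_nonneg (hc_pos I).le
    _ ≤ _ := (hc I (x - y) hnormal).trans hactive

theorem exists_pos_infDist_polyhedron_lt [FiniteDimensional ℝ E] [Fintype ι] (a : ι → E)
    (b : ι → ℝ) {ε : ℝ} (hε : 0 < ε) :
    ∃ δ > 0, ∀ x, (∀ j, ⟪a j, x⟫_ℝ < b j + δ) → infDist x (polyhedron a b) < ε := by
  obtain ⟨C, hC, hCx⟩ := exists_infDist_polyhedron_le a b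
  have hden : 0 < C * Fintype.card ι + 1 := by positivity
  refine ⟨ε / (C * Fintype.card ι + 1), by positivity, fun x hx => ?_⟩
  calc infDist x (polyhedron a b) ≤ C * ∑ j, max (⟪a j, x⟫_ℝ - b j) 0 := hCx x
    _ ≤ C * ∑ _j : ι, ε / (C * Fintype.card ι + 1) := by
        gcongr with j
        exact max_le (by linarith [hx j]) (by positivity)
    _ < ε := by
        rw [sum_const, card_univ, nsmul_eq_mul, ← mul_assoc, mul_div_assoc', div_lt_iff₀ hden]
        linarith

end Polyhedron

/-- Any closed convex polyhedron `D` can be enclosed in an open set `D′` that is a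
finite intersection of open halfspaces, with `D ⊆ D′ ⊆ B(D, ε)`. -/
theorem stmt7 {d : ℕ} (D : Set (Fin d → ℝ))
    (m : ℕ) (a : Fin m → (Fin d → ℝ)) (b : Fin m → ℝ)
    (hD : D = {x | ∀ j, (∑ i, a j i * x i) ≤ b j})
    (ε : ℝ) (hε : 0 < ε) :
    ∃ (m' : ℕ) (a' : Fin m' → (Fin d → ℝ)) (b' : Fin m' → ℝ),
      D ⊆ {x | ∀ j, (∑ i, a' j i * x i) < b' j} ∧
      {x | ∀ j, (∑ i, a' j i * x i) < b' j} ⊆ {u | Metric.infDist u D < ε} := by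
  set aE : Fin m → EuclideanSpace ℝ (Fin d) := fun j => toLp 2 (a j)
  set P := polyhedron aE b
  have hinner (j : Fin m) (x : Fin d → ℝ) : ⟪aE j, toLp 2 x⟫_ℝ = ∑ i, a j i * x i := by
    simp [aE, EuclideanSpace.inner_toLp_toLp, dotProduct, mul_comm]
  have hDP : D = ofLp '' P := by
    rw [hD, image_eq_preimage_of_inverse (toLp_ofLp 2) (ofLp_toLp 2)]
    ext x
    simp [P, polyhedron, hinner]
  obtain ⟨δ, hδ, hPδ⟩ := exists_pos_infDist_polyhedron_lt aE b hε
  refine ⟨m, a, fun j => b j + δ, fun x hx j => ?_, fun x hx => ?_⟩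
  · rw [hD] at hx
    linarith [hx j]
  · calc infDist x D ≤ infDist (toLp 2 x) P :=
          hDP ▸ (PiLp.lipschitzWith_ofLp 2 _).infDist_image_le _ P
      _ < ε := hPδ _ fun j => (hinner j x).symm ▸ hx j
end

section
/- Let {U_j : j ∈ J} be a finite collection of nonempty closed convex polyhedra in ℝ^d whose intersection ⋂_j U_j is empty. Then there exists ε₀ > 0 such that for all 0 < ε ≤ ε₀, the intersection of thickenings ⋂_j B(U_j, ε) is empty, where B(T, ε) = {u : inf_{t∈T} ‖u − t‖ < ε}. -/
/-!
Stack all the inequalities of all the `U j` into one system `A x ≤ b`. The set of right-hand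
sides `r` for which `A x ≤ r` is solvable is `A(ℝᵈ) + ℝ^ι_{≥0}`, the image of an orthant under a
linear map, hence closed: by a conic Carathéodory argument such an image is a finite union of
images of coordinate faces on which the map is injective. Since `b` lies outside this closed set,
so does `b + ε c` for small `ε`, where `c p = ∑ k |A p k|`. But a point within `ε` of every `U j`
solves `A x ≤ b + ε c`.
-/

open Set Finset Matrix

lemma exists_nonneg_sub_div_smul {ι : Type*} [Fintype ι] {c g : ι → ℝ} (hc : 0 ≤ c)
    (hg : ∃ i, 0 < g i) : ∃ i, 0 < g i ∧ 0 ≤ c - (c i / g i) • g := by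
  classical
  obtain ⟨i, hi, hmin⟩ := exists_min_image {i | 0 < g i} (fun i => c i / g i)
    (by simpa [Finset.Nonempty] using hg)
  simp only [Finset.mem_filter, Finset.mem_univ, true_and] at hi hmin
  refine ⟨i, hi, fun j => ?_⟩
  have ht : 0 ≤ c i / g i := div_nonneg (hc i) hi.le
  simp only [Pi.zero_apply, Pi.sub_apply, Pi.smul_apply, smul_eq_mul, sub_nonneg]
  rcases le_or_gt (g j) 0 with hj | hj
  · have hcj : 0 ≤ c j := hc j
    nlinarith
  · exact (le_div_iff₀ hj).1 (hmin j hj)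

section LinearImage

variable {E F : Type*} [AddCommGroup E] [Module ℝ E] [TopologicalSpace E]
  [IsTopologicalAddGroup E] [ContinuousSMul ℝ E] [T2Space E] [FiniteDimensional ℝ E]
  [AddCommGroup F] [Module ℝ F] [TopologicalSpace F]
  [IsTopologicalAddGroup F] [ContinuousSMul ℝ F] [T2Space F]

theorem LinearMap.isClosed_image_of_disjoint_ker (f : E →ₗ[ℝ] F) {V : Submodule ℝ E}
    (hV : Disjoint V (LinearMap.ker f)) {S : Set E} (hS : IsClosed S) (hSV : S ⊆ V) :
    IsClosed (f '' S) := by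
  have hinj : LinearMap.ker (f.domRestrict V) = ⊥ := by
    rw [LinearMap.ker_eq_bot']
    intro x hx
    exact Subtype.ext (LinearMap.disjoint_ker.1 hV x x.2 hx)
  have himage : f '' S = f.domRestrict V '' (V.subtype ⁻¹' S) := by
    rw [LinearMap.domRestrict, LinearMap.coe_comp, Set.image_comp, Submodule.coe_subtype,
      Set.image_preimage_eq_of_subset (by rwa [Subtype.range_coe])]
  rw [himage]
  exact (LinearMap.isClosedEmbedding_of_injective hinj).isClosedMap _
    (hS.preimage continuous_subtype_val)

end LinearImage

section Orthant

variable {ι E : Type*} [Fintype ι] [AddCommGroup E] [Module ℝ E] [TopologicalSpace E]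
  [IsTopologicalAddGroup E] [ContinuousSMul ℝ E] [T2Space E]

theorem LinearMap.isClosed_image_nonneg_of_support_subset (f : (ι → ℝ) →ₗ[ℝ] E)
    (s : Finset ι) : IsClosed (f '' {c | 0 ≤ c ∧ ∀ i ∉ s, c i = 0}) := by
  classical
  induction s using Finset.strongInduction with
  | H s ih =>
  set V : Submodule ℝ (ι → ℝ) := Submodule.pi (↑s)ᶜ fun _ => ⊥
  have hV : ∀ c, c ∈ V ↔ ∀ i ∉ s, c i = 0 := by simp [V, Submodule.mem_pi]
  by_cases hinj : Disjoint V (LinearMap.ker f)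
  · have hset : {c : ι → ℝ | 0 ≤ c ∧ ∀ i ∉ s, c i = 0} = {c | 0 ≤ c} ∩ V := by
      ext c; simp [hV]
    rw [hset]
    exact f.isClosed_image_of_disjoint_ker hinj
      ((isClosed_le continuous_const continuous_id).inter V.closed_of_finiteDimensional)
      inter_subset_right
  obtain ⟨g, hgs, hgf, hgpos⟩ : ∃ g : ι → ℝ, (∀ i ∉ s, g i = 0) ∧ f g = 0 ∧ ∃ i, 0 < g i := by
    obtain ⟨g, hgV, hgf, hg0⟩ : ∃ g ∈ V, f g = 0 ∧ g ≠ 0 := by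
      simpa [LinearMap.disjoint_ker] using hinj
    obtain ⟨i, hi⟩ := Function.ne_iff.1 hg0
    rcases hi.lt_or_gt with hneg | hpos
    · exact ⟨-g, (hV _).1 (V.neg_mem hgV), by simp [hgf], i, by simpa using hneg⟩
    · exact ⟨g, (hV g).1 hgV, hgf, i, hpos⟩
  -- Moving `c` along the kernel direction `-g` until a coordinate hits zero keeps `f c` fixed.
  have hunion : f '' {c | 0 ≤ c ∧ ∀ i ∉ s, c i = 0} =
      ⋃ i ∈ s, f '' {c | 0 ≤ c ∧ ∀ j ∉ s.erase i, c j = 0} := by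
    refine subset_antisymm ?_ (iUnion₂_subset fun i _ => image_mono fun c ⟨hc0, hcs⟩ =>
      ⟨hc0, fun j hj => hcs j (mt Finset.mem_of_mem_erase hj)⟩)
    rintro _ ⟨c, ⟨hc0, hcs⟩, rfl⟩
    obtain ⟨i, hi, hnonneg⟩ := exists_nonneg_sub_div_smul hc0 hgpos
    have his : i ∈ s := by_contra fun h => hi.ne' (hgs i h)
    refine mem_iUnion₂.2 ⟨i, his, c - (c i / g i) • g, ⟨hnonneg, fun j hj => ?_⟩, by simp [hgf]⟩
    rcases eq_or_ne j i with rfl | hji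
    · simp [hi.ne']
    · have hjs : j ∉ s := fun h => hj (Finset.mem_erase.2 ⟨hji, h⟩)
      simp [hcs j hjs, hgs j hjs]
  rw [hunion]
  exact isClosed_biUnion_finset fun i hi => ih _ (Finset.erase_ssubset hi)

theorem LinearMap.isClosed_image_nonneg (f : (ι → ℝ) →ₗ[ℝ] E) : IsClosed (f '' {c | 0 ≤ c}) := by
  simpa using f.isClosed_image_nonneg_of_support_subset Finset.univ

end Orthant

section LinearInequalities

variable {ι κ : Type*} [Fintype ι] [Fintype κ]

theorem Matrix.isClosed_setOf_exists_mulVec_le (A : Matrix ι κ ℝ) :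
    IsClosed {r : ι → ℝ | ∃ x, A *ᵥ x ≤ r} := by
  let L : ((κ ⊕ κ) ⊕ ι → ℝ) →ₗ[ℝ] ι → ℝ := A.mulVecLin ∘ₗ
    (LinearMap.funLeft ℝ ℝ (Sum.inl ∘ Sum.inl) - LinearMap.funLeft ℝ ℝ (Sum.inl ∘ Sum.inr)) +
    LinearMap.funLeft ℝ ℝ Sum.inr
  have hL : ∀ c, L c =
      A *ᵥ (fun k => c (.inl (.inl k)) - c (.inl (.inr k))) + fun i => c (.inr i) := fun _ => rfl
  suffices {r : ι → ℝ | ∃ x, A *ᵥ x ≤ r} = L '' {c | 0 ≤ c} from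
    this ▸ L.isClosed_image_nonneg
  ext r
  constructor
  · rintro ⟨x, hx⟩
    refine ⟨Sum.elim (Sum.elim (fun k => max (x k) 0) fun k => max (-x k) 0) (r - A *ᵥ x),
      ?_, ?_⟩
    · rintro ((k | k) | i)
      · simp
      · simp
      · simpa using hx i
    · ext i
      simp [hL, max_zero_sub_max_neg_zero_eq_self]
  · rintro ⟨c, hc, rfl⟩
    refine ⟨fun k => c (.inl (.inl k)) - c (.inl (.inr k)), fun i => ?_⟩
    simpa [hL] using hc (.inr i)

theorem Matrix.exists_pos_forall_abs_le_not_exists_mulVec_le_add_smul (A : Matrix ι κ ℝ)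
    {b : ι → ℝ} (h : ¬∃ x, A *ᵥ x ≤ b) (c : ι → ℝ) :
    ∃ ε₀ > 0, ∀ ε : ℝ, |ε| ≤ ε₀ → ¬∃ x, A *ᵥ x ≤ b + ε • c := by
  have hopen : IsOpen ((fun ε : ℝ => b + ε • c) ⁻¹' {r | ∃ x, A *ᵥ x ≤ r}ᶜ) :=
    A.isClosed_setOf_exists_mulVec_le.isOpen_compl.preimage (by fun_prop)
  obtain ⟨δ, hδ, hball⟩ := Metric.isOpen_iff.1 hopen 0 (by simpa using h)
  refine ⟨δ / 2, half_pos hδ, fun ε hε => hball ?_⟩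
  rw [Metric.mem_ball, dist_zero_right, Real.norm_eq_abs]
  linarith

theorem sum_mul_le_sum_mul_add_dist (a u z : κ → ℝ) :
    ∑ k, a k * u k ≤ ∑ k, a k * z k + (∑ k, |a k|) * dist u z := by
  have h : ∑ k, a k * (u k - z k) ≤ (∑ k, |a k|) * dist u z := by
    rw [Finset.sum_mul]
    refine Finset.sum_le_sum fun k _ => ?_
    calc a k * (u k - z k) ≤ |a k| * |u k - z k| := abs_mul (a k) _ ▸ le_abs_self _
      _ ≤ |a k| * dist u z := by
        gcongr
        exact (Real.dist_eq _ _).symm.trans_le (dist_le_pi_dist u z k)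
  simp only [mul_sub, Finset.sum_sub_distrib] at h
  linarith

end LinearInequalities

/-- Disjointness of finitely many nonempty closed convex polyhedra is preserved under
sufficiently small uniform thickening. -/
theorem stmt9 {d : ℕ} {J : Type*} [Fintype J] (U : J → Set (Fin d → ℝ))
    (hpoly : ∀ j, ∃ (m : ℕ) (a : Fin m → (Fin d → ℝ)) (b : Fin m → ℝ),
      U j = {x | ∀ i, (∑ k, a i k * x k) ≤ b i})
    (hne : ∀ j, (U j).Nonempty)
    (hempty : (⋂ j, U j) = ∅) :
    ∃ ε₀ : ℝ, 0 < ε₀ ∧ ∀ ε : ℝ, 0 < ε → ε ≤ ε₀ →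
      (⋂ j, {u : Fin d → ℝ | Metric.infDist u (U j) < ε}) = ∅ := by
  choose m a b hU using hpoly
  let A : Matrix (Σ j, Fin (m j)) (Fin d) ℝ := fun p => a p.1 p.2
  let B : (Σ j, Fin (m j)) → ℝ := fun p => b p.1 p.2
  have hinfeasible : ¬∃ x, A *ᵥ x ≤ B := by
    rintro ⟨x, hx⟩
    have hmem : x ∈ ⋂ j, U j := mem_iInter.2 fun j => (hU j).symm ▸ fun i => hx ⟨j, i⟩
    simp [hempty] at hmem
  obtain ⟨ε₀, hε₀, hstable⟩ := A.exists_pos_forall_abs_le_not_exists_mulVec_le_add_smul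
    hinfeasible fun p => ∑ k, |A p k|
  refine ⟨ε₀, hε₀, fun ε hε hεε₀ => eq_empty_of_forall_notMem fun u hu => ?_⟩
  refine hstable ε ((abs_of_pos hε).trans_le hεε₀) ⟨u, fun p => ?_⟩
  obtain ⟨z, hzU, hzu⟩ := (Metric.infDist_lt_iff (hne p.1)).1 (mem_iInter.1 hu p.1)
  rw [hU] at hzU
  calc (A *ᵥ u) p ≤ ∑ k, A p k * z k + (∑ k, |A p k|) * dist u z :=
        sum_mul_le_sum_mul_add_dist (A p) u z
    _ ≤ B p + ε * ∑ k, |A p k| := by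
        rw [mul_comm ε]
        gcongr
        exact hzU p.2
    _ = (B + ε • fun p => ∑ k, |A p k|) p := rfl
end
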